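/- arXiv:2307.02155 — 3 statements merged into one kernel-verified Lean document; each statement's English description precedes it below -/
import Mathlib

section
/- Let p : Ω × ℝⁿ → ℝ be a smooth real-valued function which is polynomial in ξ, and let Φ : Ω → ℝ be smooth. Define p_Φ(x,ξ,τ) := p(x, ξ + iτ dΦ(x)), the polynomial extension in ξ to complex arguments. Then for each (x,ξ), lim_{τ → 0⁺} (1/(iτ)) {p̄_Φ, p_Φ}(x,ξ,τ) = 2 {p, {p, Φ}}(x,ξ), where {a,b} = ∂_ξ a · ∂_x b − ∂_x a · ∂_ξ b is the Poisson bracket. -/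
open Complex Filter Finset

/-- Partial derivative in the `j`-th position variable of a function on phase space. -/
noncomputable def pdX {n : ℕ} (f : ((Fin n → ℝ) × (Fin n → ℝ)) → ℂ) (j : Fin n)
    (z : (Fin n → ℝ) × (Fin n → ℝ)) : ℂ :=
  fderiv ℝ (fun x => f (x, z.2)) z.1 (Pi.single j 1)

/-- Partial derivative in the `j`-th frequency variable of a function on phase space. -/
noncomputable def pdXi {n : ℕ} (f : ((Fin n → ℝ) × (Fin n → ℝ)) → ℂ) (j : Fin n)
    (z : (Fin n → ℝ) × (Fin n → ℝ)) : ℂ :=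
  fderiv ℝ (fun ξ => f (z.1, ξ)) z.2 (Pi.single j 1)

/-- The Poisson bracket `{a,b} = ∂_ξ a · ∂_x b − ∂_x a · ∂_ξ b`. -/
noncomputable def poissonBracket {n : ℕ} (a b : ((Fin n → ℝ) × (Fin n → ℝ)) → ℂ) :
    ((Fin n → ℝ) × (Fin n → ℝ)) → ℂ :=
  fun z => ∑ j, (pdXi a j z * pdX b j z - pdX a j z * pdXi b j z)

namespace Stmt6

variable {n : ℕ}

/-- Coordinatewise coercion `ℝⁿ → ℂⁿ` as a continuous linear map. -/
noncomputable def coeP (n : ℕ) : (Fin n → ℝ) →L[ℝ] (Fin n → ℂ) :=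
  ContinuousLinearMap.pi fun i => Complex.ofRealCLM.comp (ContinuousLinearMap.proj i)

@[simp] lemma coeP_apply (y : Fin n → ℝ) (i : Fin n) : coeP n y i = (y i : ℂ) := rfl

lemma coeP_single (j : Fin n) : coeP n (Pi.single j 1) = Pi.single j 1 := by
  funext i
  simp [Pi.single_apply, apply_ite]

/-- Coordinatewise complex conjugation on `ℂⁿ` as a real continuous linear map. -/
noncomputable def conjW (n : ℕ) : (Fin n → ℂ) →L[ℝ] (Fin n → ℂ) :=
  ContinuousLinearMap.pi fun i =>
    (Complex.conjCLE.toContinuousLinearMap).comp (ContinuousLinearMap.proj i)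

@[simp] lemma conjW_apply (w : Fin n → ℂ) (i : Fin n) :
    conjW n w i = (starRingEnd ℂ) (w i) := rfl

/-- `(x, w) ↦ (x, conj w)` as a real continuous linear map. -/
noncomputable def Mc (n : ℕ) :
    ((Fin n → ℝ) × (Fin n → ℂ)) →L[ℝ] ((Fin n → ℝ) × (Fin n → ℂ)) :=
  (ContinuousLinearMap.id ℝ _).prodMap (conjW n)

@[simp] lemma Mc_apply (z : (Fin n → ℝ) × (Fin n → ℂ)) : Mc n z = (z.1, conjW n z.2) := rfl

lemma conjW_coeP (v : Fin n → ℝ) : conjW n (coeP n v) = coeP n v := by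
  funext i; simp [Complex.conj_ofReal]

lemma conjW_single (j : Fin n) : conjW n (Pi.single j (1 : ℂ)) = Pi.single j 1 := by
  funext i; simp [Pi.single_apply, apply_ite]

lemma conjW_I_smul (w : Fin n → ℝ) :
    conjW n (Complex.I • coeP n w) = -(Complex.I • coeP n w) := by
  funext i
  simp [Complex.conj_ofReal]

lemma coeP_eq_sum (v : Fin n → ℝ) :
    coeP n v = ∑ k, v k • (Pi.single k (1 : ℂ) : Fin n → ℂ) := by
  funext i
  rw [Finset.sum_apply]
  simp [Pi.single_apply, apply_ite, mul_comm, Complex.real_smul]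

variable (S : Finset (Fin n → ℕ)) (c : (Fin n → ℕ) → (Fin n → ℝ) → ℝ)

/-- The polynomial `Q(x, w) = ∑ c_α(x) wᵅ` on `ℝⁿ × ℂⁿ`. -/
noncomputable def Q : ((Fin n → ℝ) × (Fin n → ℂ)) → ℂ :=
  fun z => ∑ α ∈ S, (c α z.1 : ℂ) * ∏ i, (z.2 i) ^ α i

variable {S c}

lemma hQ (hc : ∀ α, ContDiff ℝ (⊤ : ℕ∞) (c α)) : ContDiff ℝ (⊤ : ℕ∞) (Q S c) := by
  refine ContDiff.sum fun α _ => ContDiff.mul ?_ ?_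
  · exact Complex.ofRealCLM.contDiff.comp (((hc α).of_le (by simp)).comp contDiff_fst)
  · exact contDiff_prod fun i _ =>
      (((ContinuousLinearMap.proj (R := ℝ) (φ := fun _ : Fin n => ℂ) i).contDiff).comp contDiff_snd).pow _

lemma Q_conj (z : (Fin n → ℝ) × (Fin n → ℂ)) :
    Q S c (Mc n z) = (starRingEnd ℂ) (Q S c z) := by
  simp [Q, map_sum, map_mul, map_prod, map_pow, Complex.conj_ofReal]


/-- First derivative of `Q`. -/
noncomputable def Q' (S : Finset (Fin n → ℕ)) (c : (Fin n → ℕ) → (Fin n → ℝ) → ℝ) :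
    ((Fin n → ℝ) × (Fin n → ℂ)) → ((Fin n → ℝ) × (Fin n → ℂ)) →L[ℝ] ℂ :=
  fderiv ℝ (Q S c)

/-- Second derivative of `Q`. -/
noncomputable def Q'' (S : Finset (Fin n → ℕ)) (c : (Fin n → ℕ) → (Fin n → ℝ) → ℝ) :
    ((Fin n → ℝ) × (Fin n → ℂ)) →
      ((Fin n → ℝ) × (Fin n → ℂ)) →L[ℝ] ((Fin n → ℝ) × (Fin n → ℂ)) →L[ℝ] ℂ :=
  fderiv ℝ (Q' S c)

variable (hc : ∀ α, ContDiff ℝ (⊤ : ℕ∞) (c α))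

lemma hasFDerivAt_Q (hc : ∀ α, ContDiff ℝ (⊤ : ℕ∞) (c α)) (z : (Fin n → ℝ) × (Fin n → ℂ)) :
    HasFDerivAt (Q S c) (Q' S c z) z :=
  ((hQ hc).differentiable (by simp)).differentiableAt.hasFDerivAt

lemma contDiff_Q' (hc : ∀ α, ContDiff ℝ (⊤ : ℕ∞) (c α)) : ContDiff ℝ (⊤ : ℕ∞) (Q' S c) :=
  (hQ hc).fderiv_right (by simp)

lemma hasFDerivAt_Q' (hc : ∀ α, ContDiff ℝ (⊤ : ℕ∞) (c α)) (z : (Fin n → ℝ) × (Fin n → ℂ)) :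
    HasFDerivAt (Q' S c) (Q'' S c z) z :=
  ((contDiff_Q' hc).differentiable (by simp)).differentiableAt.hasFDerivAt

lemma Q''_symm (hc : ∀ α, ContDiff ℝ (⊤ : ℕ∞) (c α)) (z u v : (Fin n → ℝ) × (Fin n → ℂ)) :
    Q'' S c z u v = Q'' S c z v u :=
  second_derivative_symmetric (fun y => hasFDerivAt_Q hc y) (hasFDerivAt_Q' hc z) u v

lemma conj_Q' (hc : ∀ α, ContDiff ℝ (⊤ : ℕ∞) (c α)) (z u : (Fin n → ℝ) × (Fin n → ℂ)) :
    (starRingEnd ℂ) (Q' S c z u) = Q' S c (Mc n z) (Mc n u) := by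
  have h1 : HasFDerivAt (fun w => (starRingEnd ℂ) (Q S c w))
      ((Complex.conjCLE.toContinuousLinearMap).comp (Q' S c z)) z :=
    (Complex.conjCLE.toContinuousLinearMap.hasFDerivAt).comp z (hasFDerivAt_Q hc z)
  have h2 : HasFDerivAt (fun w => Q S c (Mc n w)) ((Q' S c (Mc n z)).comp (Mc n)) z :=
    (hasFDerivAt_Q hc (Mc n z)).comp z (Mc n).hasFDerivAt
  have h3 : (fun w => (starRingEnd ℂ) (Q S c w)) = fun w => Q S c (Mc n w) :=
    funext fun w => (Q_conj w).symm
  rw [h3] at h1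
  exact DFunLike.congr_fun (h1.unique h2) u

lemma conj_Q'' (hc : ∀ α, ContDiff ℝ (⊤ : ℕ∞) (c α)) (z u v : (Fin n → ℝ) × (Fin n → ℂ)) :
    (starRingEnd ℂ) (Q'' S c z u v) = Q'' S c (Mc n z) (Mc n u) (Mc n v) := by
  have h1 : HasFDerivAt (fun z' => Q' S c z' v)
      ((ContinuousLinearMap.apply ℝ ℂ v).comp (Q'' S c z)) z :=
    (ContinuousLinearMap.apply ℝ ℂ v).hasFDerivAt.comp z (hasFDerivAt_Q' hc z)
  have h1' : HasFDerivAt (fun z' => (starRingEnd ℂ) (Q' S c z' v))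
      ((Complex.conjCLE.toContinuousLinearMap).comp
        ((ContinuousLinearMap.apply ℝ ℂ v).comp (Q'' S c z))) z :=
    (Complex.conjCLE.toContinuousLinearMap.hasFDerivAt).comp z h1
  have h2 : HasFDerivAt (fun z' => Q' S c z' (Mc n v))
      ((ContinuousLinearMap.apply ℝ ℂ (Mc n v)).comp (Q'' S c (Mc n z))) (Mc n z) :=
    (ContinuousLinearMap.apply ℝ ℂ (Mc n v)).hasFDerivAt.comp (Mc n z)
      (hasFDerivAt_Q' hc (Mc n z))
  have h2' : HasFDerivAt (fun z' => Q' S c (Mc n z') (Mc n v))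
      (((ContinuousLinearMap.apply ℝ ℂ (Mc n v)).comp (Q'' S c (Mc n z))).comp (Mc n)) z :=
    h2.comp z (Mc n).hasFDerivAt
  have h3 : (fun z' => (starRingEnd ℂ) (Q' S c z' v)) =
      fun z' => Q' S c (Mc n z') (Mc n v) :=
    funext fun z' => conj_Q' hc z' v
  rw [h3] at h1'
  exact DFunLike.congr_fun (h1'.unique h2') u


/-! ### Slice lemmas for `pdX` and `pdXi` -/

lemma pdX_eq {f : ((Fin n → ℝ) × (Fin n → ℝ)) → ℂ}
    {L : ((Fin n → ℝ) × (Fin n → ℝ)) →L[ℝ] ℂ} {z : (Fin n → ℝ) × (Fin n → ℝ)}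
    (hf : HasFDerivAt f L z) (j : Fin n) : pdX f j z = L (Pi.single j 1, 0) := by
  have h : HasFDerivAt (fun x => f (x, z.2))
      (L.comp (ContinuousLinearMap.inl ℝ (Fin n → ℝ) (Fin n → ℝ))) z.1 :=
    hf.comp z.1 (hasFDerivAt_prodMk_left z.1 z.2)
  rw [pdX, h.fderiv]
  simp

lemma pdXi_eq {f : ((Fin n → ℝ) × (Fin n → ℝ)) → ℂ}
    {L : ((Fin n → ℝ) × (Fin n → ℝ)) →L[ℝ] ℂ} {z : (Fin n → ℝ) × (Fin n → ℝ)}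
    (hf : HasFDerivAt f L z) (j : Fin n) : pdXi f j z = L (0, Pi.single j 1) := by
  have h : HasFDerivAt (fun ξ => f (z.1, ξ))
      (L.comp (ContinuousLinearMap.inr ℝ (Fin n → ℝ) (Fin n → ℝ))) z.2 :=
    hf.comp z.2 (hasFDerivAt_prodMk_right z.1 z.2)
  rw [pdXi, h.fderiv]
  simp

/-! ### Complex linearity in the frequency directions -/

lemma fderiv_real_I_smul {g : (Fin n → ℂ) → ℂ} {w : Fin n → ℂ}
    (hg : DifferentiableAt ℂ g w) (v : Fin n → ℂ) :
    fderiv ℝ g w (Complex.I • v) = Complex.I * fderiv ℝ g w v := by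
  rw [(hg.hasFDerivAt.restrictScalars ℝ).fderiv]
  show (fderiv ℂ g w) (Complex.I • v) = Complex.I * (fderiv ℂ g w) v
  rw [map_smul, smul_eq_mul]

lemma hQx (x : Fin n → ℝ) :
    ContDiff ℂ (⊤ : ℕ∞) (fun w : Fin n → ℂ => Q S c (x, w)) := by
  refine ContDiff.sum fun α _ =>
    ContDiff.mul (contDiff_const (c := ((c α x : ℝ) : ℂ))) ?_
  exact contDiff_prod fun i _ => ((ContinuousLinearMap.proj (R := ℂ) (φ := fun _ : Fin n => ℂ) i).contDiff).pow _

lemma Q_wslice (hc : ∀ α, ContDiff ℝ (⊤ : ℕ∞) (c α)) (x : Fin n → ℝ) (w : Fin n → ℂ) :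
    HasFDerivAt (fun w' => Q S c (x, w'))
      ((Q' S c (x, w)).comp (ContinuousLinearMap.inr ℝ (Fin n → ℝ) (Fin n → ℂ))) w :=
  (hasFDerivAt_Q hc (x, w)).comp w (hasFDerivAt_prodMk_right x w)

lemma Q'_snd_eq_fderivC (hc : ∀ α, ContDiff ℝ (⊤ : ℕ∞) (c α)) (x : Fin n → ℝ) (w : Fin n → ℂ)
    (v : Fin n → ℂ) :
    Q' S c (x, w) (0, v) = fderiv ℂ (fun w' => Q S c (x, w')) w v := by
  have h1 : Q' S c (x, w) (0, v) = fderiv ℝ (fun w' => Q S c (x, w')) w v := by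
    rw [(Q_wslice hc x w).fderiv]; simp
  have h2 := ((((hQx (S := S) (c := c) x).differentiable
      (by simp)) w).hasFDerivAt.restrictScalars ℝ).fderiv
  rw [h1, h2]; rfl

lemma Q'_I_smul (hc : ∀ α, ContDiff ℝ (⊤ : ℕ∞) (c α)) (x : Fin n → ℝ) (w : Fin n → ℂ)
    (v : Fin n → ℂ) :
    Q' S c (x, w) (0, Complex.I • v) = Complex.I * Q' S c (x, w) (0, v) := by
  rw [Q'_snd_eq_fderivC hc x w, Q'_snd_eq_fderivC hc x w, map_smul, smul_eq_mul]


lemma Q'_d_wslice (hc : ∀ α, ContDiff ℝ (⊤ : ℕ∞) (c α)) (d : (Fin n → ℝ) × (Fin n → ℂ))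
    (x : Fin n → ℝ) (w : Fin n → ℂ) :
    HasFDerivAt (fun w' => Q' S c (x, w') d)
      (((ContinuousLinearMap.apply ℝ ℂ d).comp (Q'' S c (x, w))).comp
        (ContinuousLinearMap.inr ℝ (Fin n → ℝ) (Fin n → ℂ))) w :=
  (((ContinuousLinearMap.apply ℝ ℂ d).hasFDerivAt.comp (x, w)
    (hasFDerivAt_Q' hc (x, w))).comp w (hasFDerivAt_prodMk_right x w))

lemma Q''_snd_eq (hc : ∀ α, ContDiff ℝ (⊤ : ℕ∞) (c α)) (d : (Fin n → ℝ) × (Fin n → ℂ))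
    (x : Fin n → ℝ) (w : Fin n → ℂ) (u : Fin n → ℂ) :
    Q'' S c (x, w) (0, u) d = fderiv ℝ (fun w' => Q' S c (x, w') d) w u := by
  rw [(Q'_d_wslice hc d x w).fderiv]; rfl

lemma Q''_I_smul (hc : ∀ α, ContDiff ℝ (⊤ : ℕ∞) (c α)) (x : Fin n → ℝ) (w : Fin n → ℂ)
    (v : Fin n → ℂ) (d : (Fin n → ℝ) × (Fin n → ℂ))
    (hd : DifferentiableAt ℂ (fun w' => Q' S c (x, w') d) w) :
    Q'' S c (x, w) (0, Complex.I • v) d = Complex.I * Q'' S c (x, w) (0, v) d := by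
  rw [Q''_snd_eq hc, Q''_snd_eq hc, fderiv_real_I_smul hd]

lemma hol_snd (hc : ∀ α, ContDiff ℝ (⊤ : ℕ∞) (c α)) (x : Fin n → ℝ) (w : Fin n → ℂ) (k : Fin n) :
    DifferentiableAt ℂ (fun w' => Q' S c (x, w') (0, Pi.single k 1)) w := by
  have hfun : (fun w' => Q' S c (x, w') (0, Pi.single k 1)) =
      fun w' => (ContinuousLinearMap.apply ℂ ℂ (Pi.single k 1))
        (fderiv ℂ (fun w'' => Q S c (x, w'')) w') :=
    funext fun w' => Q'_snd_eq_fderivC hc x w' _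
  rw [hfun]
  have h1 : Differentiable ℂ (fderiv ℂ fun w'' => Q S c (x, w'')) :=
    ((hQx (S := S) (c := c) x).fderiv_right (m := (⊤ : ℕ∞)) (by simp)).differentiable
      (by simp)
  exact (((ContinuousLinearMap.apply ℂ ℂ (Pi.single k 1)).differentiable).comp
    h1).differentiableAt

lemma Q_xslice_deriv (hc : ∀ α, ContDiff ℝ (⊤ : ℕ∞) (c α)) (w : Fin n → ℂ) (x : Fin n → ℝ) :
    HasFDerivAt (fun x' => Q S c (x', w))
      (∑ α ∈ S, (∏ i, w i ^ α i) • (Complex.ofRealCLM.comp (fderiv ℝ (c α) x))) x := by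
  show HasFDerivAt (fun x' => ∑ α ∈ S, ((c α x' : ℝ) : ℂ) * ∏ i, w i ^ α i) _ x
  refine HasFDerivAt.fun_sum fun α _ => ?_
  have h1 : HasFDerivAt (fun x' => ((c α x' : ℝ) : ℂ))
      (Complex.ofRealCLM.comp (fderiv ℝ (c α) x)) x :=
    Complex.ofRealCLM.hasFDerivAt.comp x
      ((((hc α).differentiable (by simp)) x).hasFDerivAt)
  exact h1.mul_const _

lemma Q'_fst_eq (hc : ∀ α, ContDiff ℝ (⊤ : ℕ∞) (c α)) (x : Fin n → ℝ) (w : Fin n → ℂ)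
    (v : Fin n → ℝ) :
    Q' S c (x, w) (v, 0) =
      ∑ α ∈ S, (∏ i, w i ^ α i) * ((fderiv ℝ (c α) x v : ℝ) : ℂ) := by
  have hs : HasFDerivAt (fun x' => Q S c (x', w))
      ((Q' S c (x, w)).comp (ContinuousLinearMap.inl ℝ (Fin n → ℝ) (Fin n → ℂ))) x :=
    HasFDerivAt.comp (f := fun e => ((e, w) : (Fin n → ℝ) × (Fin n → ℂ))) x (hasFDerivAt_Q (S := S) hc (x, w)) (hasFDerivAt_prodMk_left (𝕜 := ℝ) x w)
  have h := hs.unique (Q_xslice_deriv hc w x)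
  have h2 := DFunLike.congr_fun h v
  simpa [smul_eq_mul] using h2


lemma hol_fst (hc : ∀ α, ContDiff ℝ (⊤ : ℕ∞) (c α)) (x : Fin n → ℝ) (w : Fin n → ℂ) (j : Fin n) :
    DifferentiableAt ℂ (fun w' => Q' S c (x, w') (Pi.single j 1, 0)) w := by
  have hfun : (fun w' => Q' S c (x, w') (Pi.single j 1, 0)) =
      fun w' => ∑ α ∈ S, (∏ i, w' i ^ α i) * ((fderiv ℝ (c α) x (Pi.single j 1) : ℝ) : ℂ) :=
    funext fun w' => Q'_fst_eq hc x w' _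
  rw [hfun]
  have : ContDiff ℂ (⊤ : ℕ∞) (fun w' : Fin n → ℂ =>
      ∑ α ∈ S, (∏ i, w' i ^ α i) * ((fderiv ℝ (c α) x (Pi.single j 1) : ℝ) : ℂ)) := by
    refine ContDiff.sum fun α _ => ContDiff.mul ?_ contDiff_const
    exact contDiff_prod fun i _ => ((ContinuousLinearMap.proj (R := ℂ) (φ := fun _ : Fin n => ℂ) i).contDiff).pow _
  exact (this.differentiable (by simp)).differentiableAt


/-! ### The gradient of `Φ` -/

variable (Φ : (Fin n → ℝ) → ℝ)

/-- The gradient vector of `Φ`. -/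
noncomputable def eta : (Fin n → ℝ) → (Fin n → ℝ) :=
  fun y i => fderiv ℝ Φ y (Pi.single i 1)

/-- Derivative of the gradient at `x`. -/
noncomputable def Deta (x : Fin n → ℝ) : (Fin n → ℝ) →L[ℝ] (Fin n → ℝ) :=
  fderiv ℝ (eta Φ) x

variable {Φ}

lemma eta_contDiff (hΦ : ContDiff ℝ (⊤ : ℕ∞) Φ) : ContDiff ℝ (⊤ : ℕ∞) (eta Φ) := by
  refine contDiff_pi.mpr fun i => ?_
  exact (ContinuousLinearMap.apply ℝ ℝ (Pi.single i 1)).contDiff.comp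
    (hΦ.fderiv_right (m := (⊤ : ℕ∞)) (by simp))

lemma eta_hasFDerivAt (hΦ : ContDiff ℝ (⊤ : ℕ∞) Φ) (x : Fin n → ℝ) :
    HasFDerivAt (eta Φ) (Deta Φ x) x :=
  (((eta_contDiff hΦ).differentiable (by simp)) x).hasFDerivAt

variable (Φ)

/-- The complex frequency `ξ + iτ∇Φ(x)`. -/
noncomputable def zeta (x ξ : Fin n → ℝ) : ℝ → Fin n → ℂ :=
  fun τ => coeP n ξ + τ • (Complex.I • coeP n (eta Φ x))

variable {Φ}

lemma zeta_zero (x ξ : Fin n → ℝ) : zeta Φ x ξ 0 = coeP n ξ := by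
  simp [zeta]

lemma zeta_eq (x ξ : Fin n → ℝ) (τ : ℝ) :
    zeta Φ x ξ τ = coeP n ξ + (Complex.I * (τ : ℂ)) • coeP n (eta Φ x) := by
  rw [zeta, mul_comm, mul_smul, Complex.coe_smul]

lemma zeta_hasDerivAt (x ξ : Fin n → ℝ) :
    HasDerivAt (zeta Φ x ξ) (Complex.I • coeP n (eta Φ x)) 0 := by
  have h := ((hasDerivAt_id (0 : ℝ)).smul_const
    (Complex.I • coeP n (eta Φ x))).const_add (coeP n ξ)
  rw [one_smul] at h
  exact h


/-! ### The phase-shifted symbol -/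

variable (S c Φ)

/-- `p_Φ(·,·,τ)`, as in the statement. -/
noncomputable def pPhi (τ : ℝ) : ((Fin n → ℝ) × (Fin n → ℝ)) → ℂ :=
  fun z => ∑ α ∈ S, (c α z.1 : ℂ) *
    ∏ i, ((z.2 i : ℂ) + Complex.I * (τ : ℂ) *
      ((fderiv ℝ Φ z.1 (Pi.single i 1) : ℝ) : ℂ)) ^ α i

variable {S c Φ}

lemma pPhi_eq (τ : ℝ) (z : (Fin n → ℝ) × (Fin n → ℝ)) :
    pPhi S c Φ τ z =
      Q S c (z.1, coeP n z.2 + (Complex.I * (τ : ℂ)) • coeP n (eta Φ z.1)) := by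
  simp [pPhi, Q, eta, mul_assoc]

lemma pPhi_hasFDerivAt (hc : ∀ α, ContDiff ℝ (⊤ : ℕ∞) (c α)) (hΦ : ContDiff ℝ (⊤ : ℕ∞) Φ)
    (τ : ℝ) (x ξ : Fin n → ℝ) :
    HasFDerivAt (pPhi S c Φ τ)
      ((Q' S c (x, zeta Φ x ξ τ)).comp
        ((ContinuousLinearMap.fst ℝ (Fin n → ℝ) (Fin n → ℝ)).prod
          (((coeP n).comp (ContinuousLinearMap.snd ℝ (Fin n → ℝ) (Fin n → ℝ))) +
            (Complex.I * (τ : ℂ)) • ((coeP n).comp ((Deta Φ x).comp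
              (ContinuousLinearMap.fst ℝ (Fin n → ℝ) (Fin n → ℝ)))))))
      (x, ξ) := by
  have hfun : pPhi S c Φ τ = fun z : (Fin n → ℝ) × (Fin n → ℝ) =>
      Q S c (z.1, coeP n z.2 + (Complex.I * (τ : ℂ)) • coeP n (eta Φ z.1)) :=
    funext (pPhi_eq τ)
  rw [hfun]
  have hG : HasFDerivAt (fun z : (Fin n → ℝ) × (Fin n → ℝ) =>
      ((z.1, coeP n z.2 + (Complex.I * (τ : ℂ)) • coeP n (eta Φ z.1)) :
        (Fin n → ℝ) × (Fin n → ℂ)))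
      ((ContinuousLinearMap.fst ℝ (Fin n → ℝ) (Fin n → ℝ)).prod
        (((coeP n).comp (ContinuousLinearMap.snd ℝ (Fin n → ℝ) (Fin n → ℝ))) +
          (Complex.I * (τ : ℂ)) • ((coeP n).comp ((Deta Φ x).comp
            (ContinuousLinearMap.fst ℝ (Fin n → ℝ) (Fin n → ℝ)))))) (x, ξ) := by
    refine HasFDerivAt.prodMk (hasFDerivAt_fst) (HasFDerivAt.add ?_ ?_)
    · exact ((coeP n).comp (ContinuousLinearMap.snd ℝ (Fin n → ℝ) (Fin n → ℝ))).hasFDerivAt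
    · exact (((coeP n).hasFDerivAt).comp (x, ξ)
        ((eta_hasFDerivAt hΦ x).comp (x, ξ)
          (hasFDerivAt_fst : HasFDerivAt (Prod.fst : (Fin n → ℝ) × (Fin n → ℝ) → _) _ (x, ξ)))).const_smul (Complex.I * (τ : ℂ))
  have hz : ((x, coeP n ξ + (Complex.I * (τ : ℂ)) • coeP n (eta Φ x)) :
      (Fin n → ℝ) × (Fin n → ℂ)) = (x, zeta Φ x ξ τ) := by rw [zeta_eq]
  have hQat : HasFDerivAt (Q S c) (Q' S c (x, zeta Φ x ξ τ))
      ((x, coeP n ξ + (Complex.I * (τ : ℂ)) • coeP n (eta Φ x))) := by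
    rw [hz]; exact hasFDerivAt_Q hc _
  exact hQat.comp (x, ξ) hG

lemma pdXi_pPhi (hc : ∀ α, ContDiff ℝ (⊤ : ℕ∞) (c α)) (hΦ : ContDiff ℝ (⊤ : ℕ∞) Φ)
    (τ : ℝ) (x ξ : Fin n → ℝ) (j : Fin n) :
    pdXi (pPhi S c Φ τ) j (x, ξ) = Q' S c (x, zeta Φ x ξ τ) (0, Pi.single j 1) := by
  rw [pdXi_eq (pPhi_hasFDerivAt hc hΦ τ x ξ) j]
  simp [coeP_single]

lemma pdX_pPhi (hc : ∀ α, ContDiff ℝ (⊤ : ℕ∞) (c α)) (hΦ : ContDiff ℝ (⊤ : ℕ∞) Φ)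
    (τ : ℝ) (x ξ : Fin n → ℝ) (j : Fin n) :
    pdX (pPhi S c Φ τ) j (x, ξ) =
      Q' S c (x, zeta Φ x ξ τ) (Pi.single j 1, 0) +
        (τ : ℂ) * Q' S c (x, zeta Φ x ξ τ)
          (0, Complex.I • coeP n (Deta Φ x (Pi.single j 1))) := by
  rw [pdX_eq (pPhi_hasFDerivAt hc hΦ τ x ξ) j]
  have h1 : ((ContinuousLinearMap.fst ℝ (Fin n → ℝ) (Fin n → ℝ)).prod
      (((coeP n).comp (ContinuousLinearMap.snd ℝ (Fin n → ℝ) (Fin n → ℝ))) +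
        (Complex.I * (τ : ℂ)) • ((coeP n).comp ((Deta Φ x).comp
          (ContinuousLinearMap.fst ℝ (Fin n → ℝ) (Fin n → ℝ))))))
      ((Pi.single j 1 : Fin n → ℝ), (0 : Fin n → ℝ)) =
      ((Pi.single j 1 : Fin n → ℝ), (0 : Fin n → ℂ)) +
        (0, τ • (Complex.I • coeP n (Deta Φ x (Pi.single j 1)))) := by
    simp [Prod.ext_iff, mul_comm Complex.I ((τ : ℂ)), mul_smul, Complex.coe_smul]
  have h2 : ((0 : Fin n → ℝ), τ • Complex.I • coeP n (Deta Φ x (Pi.single j 1))) =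
      τ • ((0 : Fin n → ℝ), Complex.I • coeP n (Deta Φ x (Pi.single j 1))) := by
    simp
  rw [ContinuousLinearMap.comp_apply, h1, map_add, h2, map_smul, Complex.real_smul]


lemma pdXi_conj {f : ((Fin n → ℝ) × (Fin n → ℝ)) → ℂ}
    {L : ((Fin n → ℝ) × (Fin n → ℝ)) →L[ℝ] ℂ} {z : (Fin n → ℝ) × (Fin n → ℝ)}
    (hf : HasFDerivAt f L z) (j : Fin n) :
    pdXi (fun z' => (starRingEnd ℂ) (f z')) j z = (starRingEnd ℂ) (pdXi f j z) := by
  have hf' : HasFDerivAt (fun z' => (starRingEnd ℂ) (f z'))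
      ((Complex.conjCLE.toContinuousLinearMap).comp L) z :=
    (Complex.conjCLE.toContinuousLinearMap.hasFDerivAt).comp z hf
  rw [pdXi_eq hf j, pdXi_eq hf' j]
  rfl

lemma pdX_conj {f : ((Fin n → ℝ) × (Fin n → ℝ)) → ℂ}
    {L : ((Fin n → ℝ) × (Fin n → ℝ)) →L[ℝ] ℂ} {z : (Fin n → ℝ) × (Fin n → ℝ)}
    (hf : HasFDerivAt f L z) (j : Fin n) :
    pdX (fun z' => (starRingEnd ℂ) (f z')) j z = (starRingEnd ℂ) (pdX f j z) := by
  have hf' : HasFDerivAt (fun z' => (starRingEnd ℂ) (f z'))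
      ((Complex.conjCLE.toContinuousLinearMap).comp L) z :=
    (Complex.conjCLE.toContinuousLinearMap.hasFDerivAt).comp z hf
  rw [pdX_eq hf j, pdX_eq hf' j]
  rfl

/-! ### The symbol `p` and the weight `Φ` as functions on phase space -/

variable (S c)

/-- The symbol `p` (complex-valued). -/
noncomputable def psym : ((Fin n → ℝ) × (Fin n → ℝ)) → ℂ :=
  fun z => ∑ α ∈ S, (c α z.1 : ℂ) * ∏ i, (z.2 i : ℂ) ^ α i

variable {S c}

lemma psym_eq : psym S c = fun z : (Fin n → ℝ) × (Fin n → ℝ) => Q S c (z.1, coeP n z.2) :=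
  rfl

lemma psym_hasFDerivAt (hc : ∀ α, ContDiff ℝ (⊤ : ℕ∞) (c α)) (z : (Fin n → ℝ) × (Fin n → ℝ)) :
    HasFDerivAt (psym S c)
      ((Q' S c (z.1, coeP n z.2)).comp
        ((ContinuousLinearMap.fst ℝ (Fin n → ℝ) (Fin n → ℝ)).prod
          ((coeP n).comp (ContinuousLinearMap.snd ℝ (Fin n → ℝ) (Fin n → ℝ))))) z := by
  rw [psym_eq]
  exact (hasFDerivAt_Q hc _).comp z
    (((ContinuousLinearMap.fst ℝ (Fin n → ℝ) (Fin n → ℝ)).prod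
      ((coeP n).comp (ContinuousLinearMap.snd ℝ (Fin n → ℝ) (Fin n → ℝ)))).hasFDerivAt)

lemma pdXi_psym (hc : ∀ α, ContDiff ℝ (⊤ : ℕ∞) (c α)) (z : (Fin n → ℝ) × (Fin n → ℝ)) (j : Fin n) :
    pdXi (psym S c) j z = Q' S c (z.1, coeP n z.2) (0, Pi.single j 1) := by
  rw [pdXi_eq (psym_hasFDerivAt hc z) j]
  simp [coeP_single]

lemma pdX_psym (hc : ∀ α, ContDiff ℝ (⊤ : ℕ∞) (c α)) (z : (Fin n → ℝ) × (Fin n → ℝ)) (j : Fin n) :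
    pdX (psym S c) j z = Q' S c (z.1, coeP n z.2) (Pi.single j 1, 0) := by
  rw [pdX_eq (psym_hasFDerivAt hc z) j]
  simp

lemma phic_hasFDerivAt (hΦ : ContDiff ℝ (⊤ : ℕ∞) Φ) (z : (Fin n → ℝ) × (Fin n → ℝ)) :
    HasFDerivAt (fun z' : (Fin n → ℝ) × (Fin n → ℝ) => ((Φ z'.1 : ℝ) : ℂ))
      ((Complex.ofRealCLM.comp (fderiv ℝ Φ z.1)).comp
        (ContinuousLinearMap.fst ℝ (Fin n → ℝ) (Fin n → ℝ))) z :=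
  Complex.ofRealCLM.hasFDerivAt.comp z
    ((((hΦ.differentiable (by simp)) z.1).hasFDerivAt).comp z hasFDerivAt_fst)

lemma pdX_phic (hΦ : ContDiff ℝ (⊤ : ℕ∞) Φ) (z : (Fin n → ℝ) × (Fin n → ℝ)) (j : Fin n) :
    pdX (fun z' : (Fin n → ℝ) × (Fin n → ℝ) => ((Φ z'.1 : ℝ) : ℂ)) j z =
      ((eta Φ z.1 j : ℝ) : ℂ) := by
  rw [pdX_eq (phic_hasFDerivAt hΦ z) j]
  simp [eta]

lemma pdXi_phic (hΦ : ContDiff ℝ (⊤ : ℕ∞) Φ) (z : (Fin n → ℝ) × (Fin n → ℝ)) (j : Fin n) :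
    pdXi (fun z' : (Fin n → ℝ) × (Fin n → ℝ) => ((Φ z'.1 : ℝ) : ℂ)) j z = 0 := by
  rw [pdXi_eq (phic_hasFDerivAt hΦ z) j]
  simp

lemma W_eq (hc : ∀ α, ContDiff ℝ (⊤ : ℕ∞) (c α)) (hΦ : ContDiff ℝ (⊤ : ℕ∞) Φ) :
    poissonBracket (psym S c) (fun z : (Fin n → ℝ) × (Fin n → ℝ) => ((Φ z.1 : ℝ) : ℂ)) =
      fun z : (Fin n → ℝ) × (Fin n → ℝ) =>
        ∑ k, Q' S c (z.1, coeP n z.2) (0, Pi.single k 1) * ((eta Φ z.1 k : ℝ) : ℂ) := by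
  funext z
  rw [poissonBracket]
  refine Finset.sum_congr rfl fun j _ => ?_
  rw [pdXi_psym hc, pdX_psym hc, pdX_phic hΦ, pdXi_phic hΦ]
  ring


lemma W_hasFDerivAt (hc : ∀ α, ContDiff ℝ (⊤ : ℕ∞) (c α)) (hΦ : ContDiff ℝ (⊤ : ℕ∞) Φ)
    (x ξ : Fin n → ℝ) :
    HasFDerivAt (fun z : (Fin n → ℝ) × (Fin n → ℝ) =>
        ∑ k, Q' S c (z.1, coeP n z.2) (0, Pi.single k 1) * ((eta Φ z.1 k : ℝ) : ℂ))
      (∑ k, ((Q' S c (x, coeP n ξ) (0, Pi.single k 1)) •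
          (Complex.ofRealCLM.comp ((ContinuousLinearMap.proj k).comp ((Deta Φ x).comp
            (ContinuousLinearMap.fst ℝ (Fin n → ℝ) (Fin n → ℝ))))) +
        (((eta Φ x k : ℝ) : ℂ)) •
          (((ContinuousLinearMap.apply ℝ ℂ
              ((0 : Fin n → ℝ), (Pi.single k 1 : Fin n → ℂ))).comp
            (Q'' S c (x, coeP n ξ))).comp
            ((ContinuousLinearMap.fst ℝ (Fin n → ℝ) (Fin n → ℝ)).prod
              ((coeP n).comp (ContinuousLinearMap.snd ℝ (Fin n → ℝ) (Fin n → ℝ)))))))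
      (x, ξ) := by
  refine HasFDerivAt.fun_sum fun k _ => ?_
  have hu : HasFDerivAt (fun z : (Fin n → ℝ) × (Fin n → ℝ) =>
      Q' S c (z.1, coeP n z.2) (0, Pi.single k 1))
      (((ContinuousLinearMap.apply ℝ ℂ
          ((0 : Fin n → ℝ), (Pi.single k 1 : Fin n → ℂ))).comp
        (Q'' S c (x, coeP n ξ))).comp
        ((ContinuousLinearMap.fst ℝ (Fin n → ℝ) (Fin n → ℝ)).prod
          ((coeP n).comp (ContinuousLinearMap.snd ℝ (Fin n → ℝ) (Fin n → ℝ))))) (x, ξ) :=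
    ((ContinuousLinearMap.apply ℝ ℂ
        ((0 : Fin n → ℝ), (Pi.single k 1 : Fin n → ℂ))).hasFDerivAt.comp (x, ξ)
      ((hasFDerivAt_Q' hc (x, coeP n ξ)).comp (x, ξ)
        (((ContinuousLinearMap.fst ℝ (Fin n → ℝ) (Fin n → ℝ)).prod
          ((coeP n).comp (ContinuousLinearMap.snd ℝ (Fin n → ℝ) (Fin n → ℝ)))).hasFDerivAt)))
  have hv : HasFDerivAt (fun z : (Fin n → ℝ) × (Fin n → ℝ) => ((eta Φ z.1 k : ℝ) : ℂ))
      (Complex.ofRealCLM.comp ((ContinuousLinearMap.proj k).comp ((Deta Φ x).comp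
        (ContinuousLinearMap.fst ℝ (Fin n → ℝ) (Fin n → ℝ))))) (x, ξ) := by
    have hv1 : HasFDerivAt (fun z : (Fin n → ℝ) × (Fin n → ℝ) => eta Φ z.1)
        ((Deta Φ x).comp (ContinuousLinearMap.fst ℝ (Fin n → ℝ) (Fin n → ℝ))) (x, ξ) :=
      (eta_hasFDerivAt hΦ x).comp (f := Prod.fst) (x, ξ)
        (hasFDerivAt_fst : HasFDerivAt (Prod.fst : (Fin n → ℝ) × (Fin n → ℝ) → _) _ (x, ξ))
    have hv2 : HasFDerivAt (fun z : (Fin n → ℝ) × (Fin n → ℝ) => eta Φ z.1 k)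
        ((ContinuousLinearMap.proj k).comp ((Deta Φ x).comp
          (ContinuousLinearMap.fst ℝ (Fin n → ℝ) (Fin n → ℝ)))) (x, ξ) :=
      HasFDerivAt.comp (x, ξ)
        ((ContinuousLinearMap.proj k : (Fin n → ℝ) →L[ℝ] ℝ).hasFDerivAt) hv1
    exact Complex.ofRealCLM.hasFDerivAt.comp (x, ξ) hv2
  exact hu.mul hv

lemma pdXi_W (hc : ∀ α, ContDiff ℝ (⊤ : ℕ∞) (c α)) (hΦ : ContDiff ℝ (⊤ : ℕ∞) Φ)
    (x ξ : Fin n → ℝ) (j : Fin n) :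
    pdXi (fun z : (Fin n → ℝ) × (Fin n → ℝ) =>
        ∑ k, Q' S c (z.1, coeP n z.2) (0, Pi.single k 1) * ((eta Φ z.1 k : ℝ) : ℂ)) j (x, ξ) =
      ∑ k, Q'' S c (x, coeP n ξ) (0, Pi.single j 1) (0, Pi.single k 1) *
        ((eta Φ x k : ℝ) : ℂ) := by
  rw [pdXi_eq (W_hasFDerivAt hc hΦ x ξ) j, ContinuousLinearMap.sum_apply]
  refine Finset.sum_congr rfl fun k _ => ?_
  simp [coeP_single]
  ring

lemma pdX_W (hc : ∀ α, ContDiff ℝ (⊤ : ℕ∞) (c α)) (hΦ : ContDiff ℝ (⊤ : ℕ∞) Φ)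
    (x ξ : Fin n → ℝ) (j : Fin n) :
    pdX (fun z : (Fin n → ℝ) × (Fin n → ℝ) =>
        ∑ k, Q' S c (z.1, coeP n z.2) (0, Pi.single k 1) * ((eta Φ z.1 k : ℝ) : ℂ)) j (x, ξ) =
      ∑ k, (Q'' S c (x, coeP n ξ) (Pi.single j 1, 0) (0, Pi.single k 1) *
          ((eta Φ x k : ℝ) : ℂ) +
        Q' S c (x, coeP n ξ) (0, Pi.single k 1) *
          ((Deta Φ x (Pi.single j 1) k : ℝ) : ℂ)) := by
  rw [pdX_eq (W_hasFDerivAt hc hΦ x ξ) j, ContinuousLinearMap.sum_apply]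
  refine Finset.sum_congr rfl fun k _ => ?_
  simp [coeP_single]
  ring


/-! ### The functions `A` and `B` of `τ` -/

variable (S c Φ)

/-- `∂_{ξ_j} p_Φ` at `(x,ξ)` as a function of `τ`. -/
noncomputable def Af (x ξ : Fin n → ℝ) (j : Fin n) : ℝ → ℂ :=
  fun τ => Q' S c (x, zeta Φ x ξ τ) (0, Pi.single j 1)

/-- `∂_{x_j} p_Φ` at `(x,ξ)` as a function of `τ`. -/
noncomputable def Bf (x ξ : Fin n → ℝ) (j : Fin n) : ℝ → ℂ :=
  fun τ => Q' S c (x, zeta Φ x ξ τ) (Pi.single j 1, 0) +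
    (τ : ℂ) * Q' S c (x, zeta Φ x ξ τ)
      (0, Complex.I • coeP n (Deta Φ x (Pi.single j 1)))

variable {S c Φ}

lemma Af_zero (x ξ : Fin n → ℝ) (j : Fin n) :
    Af S c Φ x ξ j 0 = Q' S c (x, coeP n ξ) (0, Pi.single j 1) := by
  simp [Af, zeta_zero]

lemma Bf_zero (x ξ : Fin n → ℝ) (j : Fin n) :
    Bf S c Φ x ξ j 0 = Q' S c (x, coeP n ξ) (Pi.single j 1, 0) := by
  simp [Bf, zeta_zero]

lemma Q'_path_hasDerivAt (hc : ∀ α, ContDiff ℝ (⊤ : ℕ∞) (c α)) (x ξ : Fin n → ℝ) :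
    HasDerivAt (fun τ => Q' S c (x, zeta Φ x ξ τ))
      (Q'' S c (x, coeP n ξ) ((0 : Fin n → ℝ), Complex.I • coeP n (eta Φ x))) 0 := by
  have hpath : HasDerivAt (fun τ => ((x, zeta Φ x ξ τ) : (Fin n → ℝ) × (Fin n → ℂ)))
      (((0 : Fin n → ℝ), Complex.I • coeP n (eta Φ x))) 0 :=
    HasDerivAt.prodMk (hasDerivAt_const (0 : ℝ) x) (zeta_hasDerivAt x ξ)
  exact (hasFDerivAt_Q' hc (x, coeP n ξ)).comp_hasDerivAt_of_eq 0 hpath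
    (by rw [zeta_zero])

lemma Af_hasDerivAt (hc : ∀ α, ContDiff ℝ (⊤ : ℕ∞) (c α)) (x ξ : Fin n → ℝ) (j : Fin n) :
    HasDerivAt (Af S c Φ x ξ j)
      (Q'' S c (x, coeP n ξ) ((0 : Fin n → ℝ), Complex.I • coeP n (eta Φ x))
        (0, Pi.single j 1)) 0 :=
  (ContinuousLinearMap.apply ℝ ℂ
    ((0 : Fin n → ℝ), (Pi.single j 1 : Fin n → ℂ))).hasFDerivAt.comp_hasDerivAt 0
    (Q'_path_hasDerivAt hc x ξ)

lemma Bf_hasDerivAt (hc : ∀ α, ContDiff ℝ (⊤ : ℕ∞) (c α)) (x ξ : Fin n → ℝ) (j : Fin n) :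
    HasDerivAt (Bf S c Φ x ξ j)
      (Q'' S c (x, coeP n ξ) ((0 : Fin n → ℝ), Complex.I • coeP n (eta Φ x))
          (Pi.single j 1, 0) +
        Q' S c (x, coeP n ξ) (0, Complex.I • coeP n (Deta Φ x (Pi.single j 1)))) 0 := by
  have h1 : HasDerivAt (fun τ => Q' S c (x, zeta Φ x ξ τ) (Pi.single j 1, 0))
      (Q'' S c (x, coeP n ξ) ((0 : Fin n → ℝ), Complex.I • coeP n (eta Φ x))
        (Pi.single j 1, 0)) 0 :=
    (ContinuousLinearMap.apply ℝ ℂ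
      ((Pi.single j 1 : Fin n → ℝ), (0 : Fin n → ℂ))).hasFDerivAt.comp_hasDerivAt 0
      (Q'_path_hasDerivAt hc x ξ)
  have h2 : HasDerivAt (fun τ => Q' S c (x, zeta Φ x ξ τ)
      (0, Complex.I • coeP n (Deta Φ x (Pi.single j 1))))
      (Q'' S c (x, coeP n ξ) ((0 : Fin n → ℝ), Complex.I • coeP n (eta Φ x))
        (0, Complex.I • coeP n (Deta Φ x (Pi.single j 1)))) 0 :=
    (ContinuousLinearMap.apply ℝ ℂ
      ((0 : Fin n → ℝ), Complex.I • coeP n (Deta Φ x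
        (Pi.single j 1)))).hasFDerivAt.comp_hasDerivAt 0
      (Q'_path_hasDerivAt hc x ξ)
  have h3 : HasDerivAt (fun τ : ℝ => (τ : ℂ)) 1 0 := by
    simpa using (hasDerivAt_id (0 : ℝ)).ofReal_comp
  have h4 := h3.mul h2
  have h5 := h1.add h4
  have h6 : HasDerivAt (Bf S c Φ x ξ j) _ 0 := h5
  simpa [zeta_zero] using h6


/-! ### Reality and the identification of the derivative -/

lemma Mc_z0 (x ξ : Fin n → ℝ) : Mc n (x, coeP n ξ) = (x, coeP n ξ) := by
  simp [conjW_coeP]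

lemma Mc_dir0 (j : Fin n) :
    Mc n ((0 : Fin n → ℝ), (Pi.single j 1 : Fin n → ℂ)) = (0, Pi.single j 1) := by
  simp [conjW_single]

lemma Mc_dir1 (j : Fin n) :
    Mc n ((Pi.single j 1 : Fin n → ℝ), (0 : Fin n → ℂ)) = (Pi.single j 1, 0) := by
  simp

lemma Mc_antidir (w : Fin n → ℝ) :
    Mc n ((0 : Fin n → ℝ), Complex.I • coeP n w) =
      -(((0 : Fin n → ℝ), Complex.I • coeP n w)) := by
  rw [Mc_apply, conjW_I_smul]
  simp [Prod.ext_iff]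

lemma conj_s (hc : ∀ α, ContDiff ℝ (⊤ : ℕ∞) (c α)) (x ξ : Fin n → ℝ) (j : Fin n) :
    (starRingEnd ℂ) (Q' S c (x, coeP n ξ) (0, Pi.single j 1)) =
      Q' S c (x, coeP n ξ) (0, Pi.single j 1) := by
  rw [conj_Q' hc, Mc_z0, Mc_dir0]

lemma conj_b (hc : ∀ α, ContDiff ℝ (⊤ : ℕ∞) (c α)) (x ξ : Fin n → ℝ) (j : Fin n) :
    (starRingEnd ℂ) (Q' S c (x, coeP n ξ) (Pi.single j 1, 0)) =
      Q' S c (x, coeP n ξ) (Pi.single j 1, 0) := by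
  rw [conj_Q' hc, Mc_z0, Mc_dir1]

lemma conj_A' (hc : ∀ α, ContDiff ℝ (⊤ : ℕ∞) (c α)) (x ξ w : Fin n → ℝ) (j : Fin n) :
    (starRingEnd ℂ) (Q'' S c (x, coeP n ξ) ((0 : Fin n → ℝ), Complex.I • coeP n w)
        (0, Pi.single j 1)) =
      -(Q'' S c (x, coeP n ξ) ((0 : Fin n → ℝ), Complex.I • coeP n w)
        (0, Pi.single j 1)) := by
  rw [conj_Q'' hc, Mc_z0, Mc_antidir, Mc_dir0, map_neg, ContinuousLinearMap.neg_apply]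

lemma conj_B'1 (hc : ∀ α, ContDiff ℝ (⊤ : ℕ∞) (c α)) (x ξ w : Fin n → ℝ) (j : Fin n) :
    (starRingEnd ℂ) (Q'' S c (x, coeP n ξ) ((0 : Fin n → ℝ), Complex.I • coeP n w)
        (Pi.single j 1, 0)) =
      -(Q'' S c (x, coeP n ξ) ((0 : Fin n → ℝ), Complex.I • coeP n w)
        (Pi.single j 1, 0)) := by
  rw [conj_Q'' hc, Mc_z0, Mc_antidir, Mc_dir1, map_neg, ContinuousLinearMap.neg_apply]

lemma conj_B'2 (hc : ∀ α, ContDiff ℝ (⊤ : ℕ∞) (c α)) (x ξ w : Fin n → ℝ) :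
    (starRingEnd ℂ) (Q' S c (x, coeP n ξ) ((0 : Fin n → ℝ), Complex.I • coeP n w)) =
      -(Q' S c (x, coeP n ξ) ((0 : Fin n → ℝ), Complex.I • coeP n w)) := by
  rw [conj_Q' hc, Mc_z0, Mc_antidir, map_neg]

lemma pair_sum_eq (g : Fin n → ℝ) :
    ((0 : Fin n → ℝ), coeP n g) =
      ∑ k, g k • (((0 : Fin n → ℝ), (Pi.single k 1 : Fin n → ℂ))) := by
  rw [coeP_eq_sum]
  rw [Prod.ext_iff]
  constructor
  · rw [Prod.fst_sum]; simp
  · rw [Prod.snd_sum]; simp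

lemma ident_A (hc : ∀ α, ContDiff ℝ (⊤ : ℕ∞) (c α)) (hΦ : ContDiff ℝ (⊤ : ℕ∞) Φ) (x ξ : Fin n → ℝ)
    (j : Fin n) :
    Q'' S c (x, coeP n ξ) ((0 : Fin n → ℝ), Complex.I • coeP n (eta Φ x))
        (0, Pi.single j 1) =
      Complex.I * ∑ k, Q'' S c (x, coeP n ξ) (0, Pi.single j 1) (0, Pi.single k 1) *
        ((eta Φ x k : ℝ) : ℂ) := by
  rw [Q''_I_smul hc x (coeP n ξ) (coeP n (eta Φ x)) (0, Pi.single j 1) (hol_snd hc x _ j)]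
  congr 1
  rw [pair_sum_eq, map_sum, ContinuousLinearMap.sum_apply]
  refine Finset.sum_congr rfl fun k _ => ?_
  rw [map_smul, ContinuousLinearMap.smul_apply,
    Q''_symm hc (x, coeP n ξ) (0, Pi.single k 1) (0, Pi.single j 1), Complex.real_smul]
  ring

lemma ident_B (hc : ∀ α, ContDiff ℝ (⊤ : ℕ∞) (c α)) (hΦ : ContDiff ℝ (⊤ : ℕ∞) Φ) (x ξ : Fin n → ℝ)
    (j : Fin n) :
    Q'' S c (x, coeP n ξ) ((0 : Fin n → ℝ), Complex.I • coeP n (eta Φ x))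
        (Pi.single j 1, 0) +
      Q' S c (x, coeP n ξ) (0, Complex.I • coeP n (Deta Φ x (Pi.single j 1))) =
      Complex.I * ∑ k, (Q'' S c (x, coeP n ξ) (Pi.single j 1, 0) (0, Pi.single k 1) *
          ((eta Φ x k : ℝ) : ℂ) +
        Q' S c (x, coeP n ξ) (0, Pi.single k 1) *
          ((Deta Φ x (Pi.single j 1) k : ℝ) : ℂ)) := by
  rw [Q''_I_smul hc x (coeP n ξ) (coeP n (eta Φ x)) (Pi.single j 1, 0) (hol_fst hc x _ j),
    Q'_I_smul hc x (coeP n ξ) (coeP n (Deta Φ x (Pi.single j 1)))]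
  rw [Finset.sum_add_distrib, mul_add]
  congr 1
  · congr 1
    rw [pair_sum_eq, map_sum, ContinuousLinearMap.sum_apply]
    refine Finset.sum_congr rfl fun k _ => ?_
    rw [map_smul, ContinuousLinearMap.smul_apply,
      Q''_symm hc (x, coeP n ξ) (0, Pi.single k 1) (Pi.single j 1, 0), Complex.real_smul]
    ring
  · congr 1
    rw [pair_sum_eq, map_sum]
    refine Finset.sum_congr rfl fun k _ => ?_
    rw [map_smul, Complex.real_smul]
    ring

end Stmt6

open Stmt6 in
/-- For a real polynomial `p(x,ξ) = ∑_{α ∈ S} c_α(x) ξ^α` with smooth coefficients and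
`p_Φ(x,ξ,τ) = p(x, ξ + iτ dΦ(x))`, one has
`lim_{τ→0⁺} (1/(iτ)) {conj p_Φ, p_Φ}(x,ξ,τ) = 2 {p,{p,Φ}}(x,ξ)`. -/
theorem stmt_6 {n : ℕ} (S : Finset (Fin n → ℕ)) (c : (Fin n → ℕ) → (Fin n → ℝ) → ℝ)
    (hc : ∀ α, ContDiff ℝ (⊤ : ℕ∞) (c α)) (Φ : (Fin n → ℝ) → ℝ) (hΦ : ContDiff ℝ (⊤ : ℕ∞) Φ)
    (x ξ : Fin n → ℝ) :
    Filter.Tendsto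
      (fun τ : ℝ =>
        (Complex.I * (τ : ℂ))⁻¹ *
          poissonBracket
            (fun z => (starRingEnd ℂ)
              (∑ α ∈ S, (c α z.1 : ℂ) *
                ∏ i, ((z.2 i : ℂ) + Complex.I * (τ : ℂ) *
                    ((fderiv ℝ Φ z.1 (Pi.single i 1) : ℝ) : ℂ)) ^ α i))
            (fun z => ∑ α ∈ S, (c α z.1 : ℂ) *
                ∏ i, ((z.2 i : ℂ) + Complex.I * (τ : ℂ) *
                    ((fderiv ℝ Φ z.1 (Pi.single i 1) : ℝ) : ℂ)) ^ α i)
            (x, ξ))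
      (nhdsWithin 0 (Set.Ioi 0))
      (nhds (2 * poissonBracket
          (fun z => ∑ α ∈ S, (c α z.1 : ℂ) * ∏ i, (z.2 i : ℂ) ^ α i)
          (poissonBracket
            (fun z => ∑ α ∈ S, (c α z.1 : ℂ) * ∏ i, (z.2 i : ℂ) ^ α i)
            (fun z => ((Φ z.1 : ℝ) : ℂ)))
          (x, ξ))) := by
  classical
  show Filter.Tendsto
      (fun τ : ℝ => (Complex.I * (τ : ℂ))⁻¹ *
        poissonBracket (fun z => (starRingEnd ℂ) (pPhi S c Φ τ z)) (pPhi S c Φ τ) (x, ξ))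
      (nhdsWithin 0 (Set.Ioi 0))
      (nhds (2 * poissonBracket (psym S c)
        (poissonBracket (psym S c)
          (fun z : (Fin n → ℝ) × (Fin n → ℝ) => ((Φ z.1 : ℝ) : ℂ))) (x, ξ)))
  -- the bracket as a function of `τ`
  set F : ℝ → ℂ := fun τ => ∑ j,
    ((starRingEnd ℂ) (Af S c Φ x ξ j τ) * Bf S c Φ x ξ j τ -
      (starRingEnd ℂ) (Bf S c Φ x ξ j τ) * Af S c Φ x ξ j τ) with hF
  have hFτ : ∀ τ : ℝ,
      poissonBracket (fun z => (starRingEnd ℂ) (pPhi S c Φ τ z)) (pPhi S c Φ τ) (x, ξ) =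
        F τ := by
    intro τ
    rw [hF, poissonBracket]
    refine Finset.sum_congr rfl fun j _ => ?_
    rw [pdXi_conj (pPhi_hasFDerivAt hc hΦ τ x ξ) j, pdX_conj (pPhi_hasFDerivAt hc hΦ τ x ξ) j,
      pdXi_pPhi hc hΦ τ x ξ j, pdX_pPhi hc hΦ τ x ξ j]
    rfl
  -- value at zero
  have hF0 : F 0 = 0 := by
    rw [hF]
    refine Finset.sum_eq_zero fun j _ => ?_
    rw [Af_zero, Bf_zero, conj_s hc, conj_b hc]
    ring
  -- the derivative of `F` at zero
  set A' : Fin n → ℂ := fun j => Q'' S c (x, coeP n ξ)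
    ((0 : Fin n → ℝ), Complex.I • coeP n (eta Φ x)) (0, Pi.single j 1) with hA'
  set B' : Fin n → ℂ := fun j => Q'' S c (x, coeP n ξ)
      ((0 : Fin n → ℝ), Complex.I • coeP n (eta Φ x)) (Pi.single j 1, 0) +
    Q' S c (x, coeP n ξ) (0, Complex.I • coeP n (Deta Φ x (Pi.single j 1))) with hB'
  set L0 : ℂ := ∑ j,
    (((starRingEnd ℂ) (A' j) * Bf S c Φ x ξ j 0 +
        (starRingEnd ℂ) (Af S c Φ x ξ j 0) * B' j) -
      ((starRingEnd ℂ) (B' j) * Af S c Φ x ξ j 0 +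
        (starRingEnd ℂ) (Bf S c Φ x ξ j 0) * A' j)) with hL0def
  have hFderiv : HasDerivAt F L0 0 := by
    rw [hF, hL0def]
    refine HasDerivAt.fun_sum fun j _ => ?_
    have hA := Af_hasDerivAt (S := S) (c := c) (Φ := Φ) hc x ξ j
    have hB := Bf_hasDerivAt (S := S) (c := c) (Φ := Φ) hc x ξ j
    have hcA : HasDerivAt (fun τ => (starRingEnd ℂ) (Af S c Φ x ξ j τ))
        ((starRingEnd ℂ) (A' j)) 0 :=
      (Complex.conjCLE.toContinuousLinearMap.hasFDerivAt).comp_hasDerivAt 0 hA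
    have hcB : HasDerivAt (fun τ => (starRingEnd ℂ) (Bf S c Φ x ξ j τ))
        ((starRingEnd ℂ) (B' j)) 0 :=
      (Complex.conjCLE.toContinuousLinearMap.hasFDerivAt).comp_hasDerivAt 0 hB
    exact (hcA.mul hB).sub (hcB.mul hA)
  -- identification of the derivative
  have hL0 : L0 = Complex.I * (2 * poissonBracket (psym S c)
      (poissonBracket (psym S c)
        (fun z : (Fin n → ℝ) × (Fin n → ℝ) => ((Φ z.1 : ℝ) : ℂ))) (x, ξ)) := by
    have hRHS : poissonBracket (psym S c)
        (poissonBracket (psym S c)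
          (fun z : (Fin n → ℝ) × (Fin n → ℝ) => ((Φ z.1 : ℝ) : ℂ))) (x, ξ) =
        ∑ j, (Q' S c (x, coeP n ξ) (0, Pi.single j 1) *
            (∑ k, (Q'' S c (x, coeP n ξ) (Pi.single j 1, 0) (0, Pi.single k 1) *
                ((eta Φ x k : ℝ) : ℂ) +
              Q' S c (x, coeP n ξ) (0, Pi.single k 1) *
                ((Deta Φ x (Pi.single j 1) k : ℝ) : ℂ))) -
          Q' S c (x, coeP n ξ) (Pi.single j 1, 0) *
            (∑ k, Q'' S c (x, coeP n ξ) (0, Pi.single j 1) (0, Pi.single k 1) *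
              ((eta Φ x k : ℝ) : ℂ))) := by
      rw [poissonBracket]
      refine Finset.sum_congr rfl fun j _ => ?_
      rw [W_eq hc hΦ, pdXi_psym hc (x, ξ) j, pdX_psym hc (x, ξ) j,
        pdX_W hc hΦ x ξ j, pdXi_W hc hΦ x ξ j]
    rw [hRHS, hL0def, Finset.mul_sum, Finset.mul_sum]
    refine Finset.sum_congr rfl fun j _ => ?_
    simp only [hA', hB']
    rw [Af_zero, Bf_zero, conj_s hc, conj_b hc]
    rw [map_add, conj_A' hc x ξ (eta Φ x) j, conj_B'1 hc x ξ (eta Φ x) j,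
      conj_B'2 hc x ξ (Deta Φ x (Pi.single j 1))]
    linear_combination (2 * Q' S c (x, coeP n ξ) (0, Pi.single j 1)) * ident_B hc hΦ x ξ j -
      (2 * Q' S c (x, coeP n ξ) (Pi.single j 1, 0)) * ident_A hc hΦ x ξ j
  -- pass to the limit
  have hslope := hasDerivAt_iff_tendsto_slope.mp hFderiv
  have h2 : Filter.Tendsto (fun τ : ℝ => Complex.I⁻¹ * slope F 0 τ)
      (nhdsWithin 0 {(0 : ℝ)}ᶜ) (nhds (Complex.I⁻¹ * L0)) :=
    hslope.const_mul _
  have h3 : Filter.Tendsto (fun τ : ℝ => Complex.I⁻¹ * slope F 0 τ)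
      (nhdsWithin 0 (Set.Ioi 0)) (nhds (Complex.I⁻¹ * L0)) :=
    h2.mono_left (nhdsWithin_mono 0 (fun τ hτ => ne_of_gt hτ))
  have hfun : ∀ τ : ℝ, Complex.I⁻¹ * slope F 0 τ =
      (Complex.I * (τ : ℂ))⁻¹ * F τ := by
    intro τ
    rw [slope_def_module, hF0, sub_zero, sub_zero, Complex.real_smul, Complex.ofReal_inv,
      mul_inv]
    ring
  have hval : Complex.I⁻¹ * L0 = 2 * poissonBracket (psym S c)
      (poissonBracket (psym S c)
        (fun z : (Fin n → ℝ) × (Fin n → ℝ) => ((Φ z.1 : ℝ) : ℂ))) (x, ξ) := by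
    rw [hL0, inv_mul_cancel_left₀ Complex.I_ne_zero]
  rw [← hval]
  refine Filter.Tendsto.congr (fun τ => ?_) h3
  rw [hfun τ, hFτ τ]
end

section
/- Let u : ℝ × ℝⁿ → ℂ be a Schwartz function and let e^{-ε|D_t|²/(2τ)} be the Fourier multiplier in the t-variable with symbol e^{-ε|ξ_t|²/(2τ)}, for ε, τ > 0. Then e^{-ε|D_t|²/(2τ)}(t u) = (t + i ε D_t/τ) e^{-ε|D_t|²/(2τ)} u, where D_t = (1/i)∂_t. -/
/-!
On the Fourier side, multiplication by `t` is `(-2πi)⁻¹ ∂_ξ`. Commuting it past a symbol `m` with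
the Leibniz rule leaves the multiplier with symbol `m' / (2πi)`. For the Gaussian symbol
`m ξ = exp (-c ξ²)` one has `m' = -2c ξ m`, and multiplying a symbol by `ξ` amounts to applying
`(2πi)⁻¹ ∂_t` to the multiplied function; for `c = ε (2π)² / (2τ)` the constants combine to `ε / τ`.
-/

open FourierTransform

/-- The Fourier multiplier `e^{-ε|D_t|²/(2τ)}` in one variable, with `D_t = (1/i)∂_t`,
implemented via the Fourier transform `𝓕 v (ξ) = ∫ e^{-2πi tξ} v(t) dt`
(so the symbol is evaluated at the angular frequency `2πξ`). -/
noncomputable def gaussMult (ε τ : ℝ) (v : ℝ → ℂ) : ℝ → ℂ :=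
  𝓕⁻ fun ξ : ℝ => ((Real.exp (-(ε * (2 * Real.pi * ξ) ^ 2) / (2 * τ)) : ℝ) : ℂ) * 𝓕 v ξ

open MeasureTheory Complex Real
open scoped SchwartzMap

section Slice

variable {E F V : Type*} [NormedAddCommGroup E] [NormedSpace ℝ E] [NormedAddCommGroup F]
  [NormedSpace ℝ F] [NormedAddCommGroup V] [NormedSpace ℝ V]

theorem hasTemperateGrowth_prodMk_left (y : F) :
    (fun x : E => (x, y)).HasTemperateGrowth := by
  convert (ContinuousLinearMap.inl ℝ E F).hasTemperateGrowth.add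
    (Function.HasTemperateGrowth.const ((0 : E), y)) using 1
  ext x <;> simp

noncomputable def SchwartzMap.compProdMkLeft (y : F) : 𝓢(E × F, V) →L[ℝ] 𝓢(E, V) :=
  SchwartzMap.compCLM ℝ (hasTemperateGrowth_prodMk_left y)
    ⟨1, 1, fun x => by simpa using (norm_fst_le (x, y)).trans (le_add_of_nonneg_left zero_le_one)⟩

end Slice

namespace Real

theorem fourier_const_mul (a : ℂ) (f : ℝ → ℂ) (ξ : ℝ) :
    𝓕 (fun s => a * f s) ξ = a * 𝓕 f ξ :=
  congrFun (VectorFourier.fourierIntegral_const_smul _ _ _ f a) ξ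

theorem fourierInv_const_mul (a : ℂ) (f : ℝ → ℂ) (t : ℝ) :
    𝓕⁻ (fun ξ => a * f ξ) t = a * 𝓕⁻ f t :=
  congrFun (VectorFourier.fourierIntegral_const_smul _ _ _ f a) t

theorem fourierInv_sub {f g : ℝ → ℂ} (hf : Integrable f) (hg : Integrable g) (t : ℝ) :
    𝓕⁻ (fun ξ => f ξ - g ξ) t = 𝓕⁻ f t - 𝓕⁻ g t := by
  simp only [fourierInv_eq_fourier_neg, fourier_eq, smul_sub]
  exact integral_sub ((fourierIntegral_convergent_iff _).2 hf)
    ((fourierIntegral_convergent_iff _).2 hg)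

theorem fourier_ofReal_mul {f : ℝ → ℂ} (hf : Integrable f)
    (hf' : Integrable fun s : ℝ => (s : ℂ) * f s) (ξ : ℝ) :
    𝓕 (fun s : ℝ => (s : ℂ) * f s) ξ = (-(2 * π * I))⁻¹ * deriv (𝓕 f) ξ := by
  have hsmul : Integrable fun s : ℝ => s • f s := by simpa only [real_smul] using hf'
  have hcomm : (fun s : ℝ => (-2 * π * I * s) • f s)
      = fun s : ℝ => -(2 * π * I) * ((s : ℂ) * f s) := by
    ext s; rw [smul_eq_mul]; ring
  rw [deriv_fourier hf hsmul, hcomm, fourier_const_mul, ← mul_assoc,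
    inv_mul_cancel₀ (by simp [pi_ne_zero]), one_mul]

theorem fourierInv_deriv {g : ℝ → ℂ} (hg : Integrable g) (hg_diff : Differentiable ℝ g)
    (hg' : Integrable (deriv g)) (t : ℝ) :
    𝓕⁻ (deriv g) t = -(2 * π * I * t) * 𝓕⁻ g t := by
  rw [fourierInv_eq_fourier_neg, fourierInv_eq_fourier_neg, fourier_deriv hg hg_diff hg']
  simp

theorem hasDerivAt_fourierInv {g : ℝ → ℂ} (hg : Integrable g)
    (hg' : Integrable fun ξ : ℝ => (ξ : ℂ) * g ξ) (t : ℝ) :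
    HasDerivAt (𝓕⁻ g) (2 * π * I * 𝓕⁻ (fun ξ : ℝ => (ξ : ℂ) * g ξ) t) t := by
  have hsmul : Integrable fun ξ : ℝ => ξ • g ξ := by simpa only [real_smul] using hg'
  have hcomp : 𝓕⁻ g = 𝓕 g ∘ Neg.neg := funext (fourierInv_eq_fourier_neg g)
  have hcomm : (fun ξ : ℝ => (-2 * π * I * ξ) • g ξ)
      = fun ξ : ℝ => -(2 * π * I) * ((ξ : ℂ) * g ξ) := by
    ext ξ; rw [smul_eq_mul]; ring
  have h := (hasDerivAt_fourier hg hsmul (-t)).scomp t (hasDerivAt_neg t)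
  rw [hcomm, fourier_const_mul] at h
  rw [hcomp, fourierInv_eq_fourier_neg]
  exact h.congr_deriv (by simp)

end Real

theorem SchwartzMap.integrable_mul_of_norm_le (f : 𝓢(ℝ, ℂ)) {g : ℝ → ℂ}
    (hg : AEStronglyMeasurable g) {C : ℝ} (hC : ∀ ξ, ‖g ξ‖ ≤ C * (1 + ‖ξ‖)) :
    Integrable fun ξ => g ξ * f ξ := by
  refine ((f.integrable.norm.add (f.integrable_pow_mul volume 1)).const_mul C).mono'
    (hg.mul f.continuous.aestronglyMeasurable) (ae_of_all _ fun ξ => ?_)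
  calc ‖g ξ * f ξ‖ = ‖g ξ‖ * ‖f ξ‖ := norm_mul _ _
    _ ≤ C * (1 + ‖ξ‖) * ‖f ξ‖ := by gcongr; exact hC ξ
    _ = C * (‖f ξ‖ + ‖ξ‖ ^ 1 * ‖f ξ‖) := by ring

noncomputable def fourierMultiplier (m v : ℝ → ℂ) : ℝ → ℂ :=
  𝓕⁻ fun ξ => m ξ * 𝓕 v ξ

theorem fourierMultiplier_const_mul (a : ℂ) (m v : ℝ → ℂ) (t : ℝ) :
    fourierMultiplier (fun ξ => a * m ξ) v t = a * fourierMultiplier m v t := by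
  simp only [fourierMultiplier, mul_assoc, fourierInv_const_mul]

theorem hasDerivAt_fourierMultiplier {m : ℝ → ℂ} {C : ℝ} (hm : AEStronglyMeasurable m)
    (hm_le : ∀ ξ, ‖m ξ‖ ≤ C) (v : 𝓢(ℝ, ℂ)) (t : ℝ) :
    HasDerivAt (fourierMultiplier m v)
      (2 * π * I * fourierMultiplier (fun ξ => ξ * m ξ) v t) t := by
  have hG : Integrable fun ξ => m ξ * 𝓕 v ξ := (𝓕 v).integrable.bdd_mul hm (ae_of_all _ hm_le)
  have hξG : Integrable fun ξ : ℝ => (ξ : ℂ) * (m ξ * 𝓕 v ξ) := by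
    have hξw := (𝓕 v).integrable_mul_of_norm_le (g := fun ξ : ℝ => (ξ : ℂ)) (C := 1)
      (by fun_prop) fun ξ => by simp
    simpa only [mul_left_comm] using hξw.bdd_mul hm (ae_of_all _ hm_le)
  simpa only [fourierMultiplier, mul_assoc, SchwartzMap.fourier_coe] using
    hasDerivAt_fourierInv hG hξG t

theorem fourierMultiplier_ofReal_mul {m : ℝ → ℂ} {C C' : ℝ} (hm : Differentiable ℝ m)
    (hm_le : ∀ ξ, ‖m ξ‖ ≤ C) (hm'_le : ∀ ξ, ‖deriv m ξ‖ ≤ C' * (1 + ‖ξ‖)) (v : 𝓢(ℝ, ℂ))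
    (t : ℝ) :
    fourierMultiplier m (fun s : ℝ => (s : ℂ) * v s) t
      = t * fourierMultiplier m v t + (2 * π * I)⁻¹ * fourierMultiplier (deriv m) v t := by
  set w : 𝓢(ℝ, ℂ) := 𝓕 v
  set G := fun ξ => m ξ * w ξ
  have hG_deriv : ∀ ξ, HasDerivAt G (deriv m ξ * w ξ + m ξ * deriv w ξ) ξ := fun ξ =>
    (hm ξ).hasDerivAt.mul (w.hasDerivAt ξ)
  have hG : Integrable G := w.integrable.bdd_mul hm.continuous.aestronglyMeasurable
    (ae_of_all _ hm_le)
  have hm'w : Integrable fun ξ => deriv m ξ * w ξ :=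
    w.integrable_mul_of_norm_le (measurable_deriv m).aestronglyMeasurable hm'_le
  have hmw' : Integrable fun ξ => m ξ * deriv w ξ := by
    simpa only [SchwartzMap.derivCLM_apply] using (SchwartzMap.derivCLM ℝ ℂ w).integrable.bdd_mul
      hm.continuous.aestronglyMeasurable (ae_of_all _ hm_le)
  have hG' : Integrable (deriv G) := by
    rw [funext fun ξ => (hG_deriv ξ).deriv]
    exact hm'w.add hmw'
  have hsv : ∀ ξ, 𝓕 (fun s : ℝ => (s : ℂ) * v s) ξ = (-(2 * π * I))⁻¹ * deriv w ξ :=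
    fourier_ofReal_mul v.integrable
      (v.integrable_mul_of_norm_le (C := 1) (by fun_prop) fun s => by simp)
  have key : (fun ξ => m ξ * 𝓕 (fun s : ℝ => (s : ℂ) * v s) ξ)
      = fun ξ => (-(2 * π * I))⁻¹ * (deriv G ξ - deriv m ξ * w ξ) := by
    ext ξ
    rw [hsv, (hG_deriv ξ).deriv]
    ring
  calc fourierMultiplier m (fun s : ℝ => (s : ℂ) * v s) t
      = (-(2 * π * I))⁻¹ * (𝓕⁻ (deriv G) t - fourierMultiplier (deriv m) v t) := by
        rw [fourierMultiplier, key, fourierInv_const_mul, fourierInv_sub hG' hm'w]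
        rfl
    _ = (-(2 * π * I))⁻¹
          * (-(2 * π * I * t) * fourierMultiplier m v t - fourierMultiplier (deriv m) v t) := by
        rw [fourierInv_deriv hG (fun ξ => (hG_deriv ξ).differentiableAt) hG']
        rfl
    _ = t * fourierMultiplier m v t + (2 * π * I)⁻¹ * fourierMultiplier (deriv m) v t := by
        field_simp
        ring

noncomputable def gaussianSymbol (c ξ : ℝ) : ℂ :=
  (Real.exp (-(c * ξ ^ 2)) : ℝ)

theorem hasDerivAt_gaussianSymbol (c ξ : ℝ) :
    HasDerivAt (gaussianSymbol c) (-(2 * c) * (ξ * gaussianSymbol c ξ)) ξ := by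
  have h := (((hasDerivAt_pow 2 ξ).const_mul c).neg.exp).ofReal_comp
  refine h.congr_deriv ?_
  simp only [gaussianSymbol, Pi.neg_apply]
  push_cast
  ring

theorem deriv_gaussianSymbol (c : ℝ) :
    deriv (gaussianSymbol c) = fun ξ => -(2 * c) * (ξ * gaussianSymbol c ξ) :=
  funext fun ξ => (hasDerivAt_gaussianSymbol c ξ).deriv

theorem norm_gaussianSymbol_le_one {c : ℝ} (hc : 0 ≤ c) (ξ : ℝ) : ‖gaussianSymbol c ξ‖ ≤ 1 := by
  rw [gaussianSymbol, norm_real, Real.norm_eq_abs, Real.abs_exp, Real.exp_le_one_iff]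
  nlinarith [sq_nonneg ξ]

theorem norm_deriv_gaussianSymbol_le {c : ℝ} (hc : 0 ≤ c) (ξ : ℝ) :
    ‖deriv (gaussianSymbol c) ξ‖ ≤ 2 * c * (1 + ‖ξ‖) := by
  have h2c : ‖(2 * c : ℂ)‖ = 2 * c := by
    rw [← ofReal_ofNat, ← ofReal_mul, norm_real, Real.norm_of_nonneg (by positivity)]
  rw [deriv_gaussianSymbol, norm_mul, norm_mul, norm_neg, norm_real, h2c]
  have := norm_gaussianSymbol_le_one hc ξ
  gcongr
  nlinarith [norm_nonneg ξ, norm_nonneg (gaussianSymbol c ξ)]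

theorem gaussMult_eq_fourierMultiplier (ε τ : ℝ) :
    gaussMult ε τ = fourierMultiplier (gaussianSymbol (ε * (2 * π) ^ 2 / (2 * τ))) := by
  funext v
  simp only [gaussMult, fourierMultiplier, gaussianSymbol]
  congr 1
  funext ξ
  congr 4
  ring

/-- Commutation of the Fourier multiplier `e^{-ε|D_t|²/(2τ)}` with multiplication by `t`:
`e^{-ε|D_t|²/(2τ)}(t u) = (t + iε D_t/τ) e^{-ε|D_t|²/(2τ)} u`. -/
theorem stmt_11 {d : ℕ} (u : SchwartzMap (ℝ × (Fin d → ℝ)) ℂ) (ε τ : ℝ)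
    (hε : 0 < ε) (hτ : 0 < τ) (t : ℝ) (x : Fin d → ℝ) :
    gaussMult ε τ (fun s => (s : ℂ) * u (s, x)) t
      = (t : ℂ) * gaussMult ε τ (fun s => u (s, x)) t
        + Complex.I * ((ε / τ : ℝ) : ℂ) *
            ((Complex.I)⁻¹ * deriv (gaussMult ε τ fun s => u (s, x)) t) := by
  set c := ε * (2 * π) ^ 2 / (2 * τ)
  have hc : 0 ≤ c := by positivity
  have hm : Differentiable ℝ (gaussianSymbol c) := fun ξ =>
    (hasDerivAt_gaussianSymbol c ξ).differentiableAt
  set v := SchwartzMap.compProdMkLeft x u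
  change gaussMult ε τ (fun s => (s : ℂ) * v s) t = t * gaussMult ε τ v t
    + I * ((ε / τ : ℝ) : ℂ) * (I⁻¹ * deriv (gaussMult ε τ v) t)
  have hm_le := norm_gaussianSymbol_le_one hc
  rw [gaussMult_eq_fourierMultiplier,
    fourierMultiplier_ofReal_mul hm hm_le (norm_deriv_gaussianSymbol_le hc),
    deriv_gaussianSymbol, fourierMultiplier_const_mul,
    (hasDerivAt_fourierMultiplier hm.continuous.aestronglyMeasurable hm_le v t).deriv]
  generalize fourierMultiplier (fun ξ => ξ * gaussianSymbol c ξ) v t = F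
  congr 1
  simp only [c]
  push_cast
  field_simp
  linear_combination -(ε * F / τ) * I_sq
end

section
/- (Paley–Wiener–Schwartz, order-zero case, one direction) Suppose g is a compactly supported distribution of order zero on ℝ whose support is contained in (−∞, 0]. Then its Fourier–Laplace transform ĝ(ζ) = ⟨g, s ↦ e^{-isζ}⟩ extends to an entire function on ℂ which is uniformly bounded on the closed upper half-plane {x + iy : y ≥ 0}. -/
/-!
On the closed upper half-plane `|e^{-isζ}| = e^{s Im ζ} ≤ 1` for `s ≤ 0`, so the transform is
bounded there by the total variation `∫ ‖w‖ dμ`. Holomorphy uses only that the support is bounded: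
for `|s| ≤ C` the `ζ`-derivative `-is e^{-isζ} w(s)` is dominated, locally uniformly in `ζ`, by a
multiple of `‖w‖`, so one may differentiate under the integral sign.
-/

open MeasureTheory Complex

noncomputable def fourierLaplace (μ : Measure ℝ) (w : ℝ → ℂ) (ζ : ℂ) : ℂ :=
  ∫ s, cexp (-I * s * ζ) * w s ∂μ

lemma norm_cexp_neg_I_mul_mul (s : ℝ) (ζ : ℂ) : ‖cexp (-I * s * ζ)‖ = Real.exp (s * ζ.im) := by
  rw [norm_exp]
  simp [mul_re, mul_im]

lemma norm_cexp_neg_I_mul_mul_le_one {s : ℝ} {ζ : ℂ} (hs : s ≤ 0) (hζ : 0 ≤ ζ.im) :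
    ‖cexp (-I * s * ζ)‖ ≤ 1 := by
  rw [norm_cexp_neg_I_mul_mul, Real.exp_le_one_iff]
  exact mul_nonpos_of_nonpos_of_nonneg hs hζ

lemma norm_cexp_neg_I_mul_mul_le {s C R : ℝ} {ζ : ℂ} (hs : |s| ≤ C) (hζ : ‖ζ‖ ≤ R) :
    ‖cexp (-I * s * ζ)‖ ≤ Real.exp (C * R) := by
  rw [norm_cexp_neg_I_mul_mul, Real.exp_le_exp]
  calc s * ζ.im ≤ |s| * |ζ.im| := (le_abs_self _).trans (abs_mul _ _).le
    _ ≤ C * R := mul_le_mul hs ((abs_im_le_norm ζ).trans hζ) (abs_nonneg _) ((abs_nonneg s).trans hs)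

section

variable {μ : Measure ℝ} {w : ℝ → ℂ}

theorem norm_fourierLaplace_le (hw : Integrable w μ) (hsupp : ∀ᵐ s ∂μ, s ≤ 0) {ζ : ℂ}
    (hζ : 0 ≤ ζ.im) : ‖fourierLaplace μ w ζ‖ ≤ ∫ s, ‖w s‖ ∂μ :=
  norm_integral_le_of_norm_le hw.norm <| hsupp.mono fun s hs => by
    rw [norm_mul]
    exact mul_le_of_le_one_left (norm_nonneg _) (norm_cexp_neg_I_mul_mul_le_one hs hζ)

theorem integrable_cexp_neg_I_mul_mul (hw : Integrable w μ) {C : ℝ} (hsupp : ∀ᵐ s ∂μ, |s| ≤ C)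
    (ζ : ℂ) : Integrable (fun s : ℝ => cexp (-I * s * ζ) * w s) μ :=
  (hw.norm.const_mul (Real.exp (C * ‖ζ‖))).mono'
    ((Continuous.aestronglyMeasurable (by fun_prop)).mul hw.1) <| hsupp.mono fun s hs => by
      rw [norm_mul]
      exact mul_le_mul_of_nonneg_right (norm_cexp_neg_I_mul_mul_le hs le_rfl) (norm_nonneg _)

theorem hasDerivAt_fourierLaplace (hw : Integrable w μ) {C : ℝ} (hsupp : ∀ᵐ s ∂μ, |s| ≤ C)
    (ζ₀ : ℂ) :
    HasDerivAt (fourierLaplace μ w) (∫ s, -I * s * cexp (-I * s * ζ₀) * w s ∂μ) ζ₀ := by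
  set R := ‖ζ₀‖ + 1
  have hnorm_le : ∀ ζ ∈ Metric.ball ζ₀ 1, ‖ζ‖ ≤ R := fun ζ hζ => by
    have := norm_le_norm_add_norm_sub' ζ ζ₀
    rw [Metric.mem_ball, dist_eq_norm] at hζ
    linarith
  have hderiv : ∀ (s : ℝ) (ζ : ℂ), HasDerivAt (fun ζ => cexp (-I * s * ζ) * w s)
      (-I * s * cexp (-I * s * ζ) * w s) ζ := fun s ζ => by
    have := (((hasDerivAt_id ζ).const_mul (-I * s)).cexp).mul_const (w s)
    simpa [mul_comm, mul_left_comm] using this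
  refine (hasDerivAt_integral_of_dominated_loc_of_deriv_le (Metric.ball_mem_nhds ζ₀ one_pos)
    (.of_forall fun ζ => (Continuous.aestronglyMeasurable (by fun_prop)).mul hw.1)
    (integrable_cexp_neg_I_mul_mul hw hsupp ζ₀)
    ((Continuous.aestronglyMeasurable (by fun_prop)).mul hw.1)
    (bound := fun s => C * Real.exp (C * R) * ‖w s‖) ?_ (hw.norm.const_mul _)
    (.of_forall fun s ζ _ => hderiv s ζ)).2
  filter_upwards [hsupp] with s hs ζ hζ
  have hC : 0 ≤ C := (abs_nonneg s).trans hs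
  have hIs : ‖-I * (s : ℂ)‖ = |s| := by simp
  rw [norm_mul, norm_mul, hIs]
  gcongr
  exact norm_cexp_neg_I_mul_mul_le hs (hnorm_le ζ hζ)

theorem differentiable_fourierLaplace (hw : Integrable w μ) {C : ℝ} (hsupp : ∀ᵐ s ∂μ, |s| ≤ C) :
    Differentiable ℂ (fourierLaplace μ w) :=
  fun ζ => (hasDerivAt_fourierLaplace hw hsupp ζ).differentiableAt

end

/-- The order-zero distribution `g` is modelled as the complex measure `w dμ`. -/
theorem stmt_16_general (μ : Measure ℝ) (w : ℝ → ℂ)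
    (hw : Integrable w μ) (a : ℝ) (hcompact : μ (Set.Iio a) = 0)
    (hsupp : μ (Set.Ioi 0) = 0) :
    Differentiable ℂ (fun ζ : ℂ => ∫ s, Complex.exp (-Complex.I * (s : ℂ) * ζ) * w s ∂μ)
    ∧ ∃ M : ℝ, ∀ ζ : ℂ, 0 ≤ ζ.im →
        ‖∫ s, Complex.exp (-Complex.I * (s : ℂ) * ζ) * w s ∂μ‖ ≤ M := by
  have hle : ∀ᵐ s ∂μ, s ≤ 0 :=
    (measure_eq_zero_iff_ae_notMem.1 hsupp).mono fun s hs => not_lt.1 hs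
  have hge : ∀ᵐ s ∂μ, a ≤ s :=
    (measure_eq_zero_iff_ae_notMem.1 hcompact).mono fun s hs => not_lt.1 hs
  have hbdd : ∀ᵐ s ∂μ, |s| ≤ |a| := by
    filter_upwards [hle, hge] with s hs₀ hsa
    exact abs_le.2 ⟨(neg_abs_le a).trans hsa, hs₀.trans (abs_nonneg a)⟩
  exact ⟨differentiable_fourierLaplace hw hbdd, _, fun ζ hζ => norm_fourierLaplace_le hw hle hζ⟩

/-- Paley–Wiener–Schwartz, order-zero case, one direction. A compactly supported
distribution of order zero on `ℝ` is a compactly supported complex measure, modeled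
here as `w dμ` with `μ` finite, `w` integrable, `μ`-support in `[a, 0]`. Its
Fourier–Laplace transform `ζ ↦ ∫ e^{-isζ} w(s) dμ(s)` is entire and uniformly bounded
on the closed upper half-plane. -/
theorem stmt_16 (μ : Measure ℝ) [IsFiniteMeasure μ] (w : ℝ → ℂ)
    (hw : Integrable w μ) (a : ℝ) (hcompact : μ (Set.Iio a) = 0)
    (hsupp : μ (Set.Ioi 0) = 0) :
    Differentiable ℂ (fun ζ : ℂ => ∫ s, Complex.exp (-Complex.I * (s : ℂ) * ζ) * w s ∂μ)
    ∧ ∃ M : ℝ, ∀ ζ : ℂ, 0 ≤ ζ.im →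
        ‖∫ s, Complex.exp (-Complex.I * (s : ℂ) * ζ) * w s ∂μ‖ ≤ M :=
  stmt_16_general μ w hw a hcompact hsupp
end
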